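/- Let H1 be a hypergraph, let h_p be a set of nodes, let M_p ⊆ h_p, and let C_p be an [M_p]-component of H1 with h_p ∩ C_p ≠ ∅. Set M_r = h_p ∩ Fr(C_p). Then every [M_r]-component C_r of H1 such that C_p ∪ C_r is [M_p ∩ M_r]-connected satisfies C_r ⊆ C_p, and moreover every such C_r is an [h_p]-component of H1. -/

import Mathlib

/-! Common definitions: hypergraphs, components, the Robber and Captain game,
the Robber and Marshal game, tree projections, (generalized) hypertree decompositions. -/

variable {α : Type} [DecidableEq α]

/-- A hypergraph: a finite set of nodes and a finite set of hyperedges, each a subset of the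
nodes, such that every node occurs in some hyperedge. -/
structure FinHypergraph (α : Type) [DecidableEq α] where
  nodes : Finset α
  edges : Finset (Finset α)
  edge_sub : ∀ h ∈ edges, h ⊆ nodes
  cover : ∀ x ∈ nodes, ∃ h ∈ edges, x ∈ h

namespace FinHypergraph

/-- `X` and `Y` are `[M]`-adjacent: some hyperedge `h` satisfies `{X,Y} ⊆ h \ M`. -/
def MAdj (H : FinHypergraph α) (M : Finset α) (X Y : α) : Prop :=
  ∃ h ∈ H.edges, X ∈ h ∧ Y ∈ h ∧ X ∉ M ∧ Y ∉ M

/-- An `[M]`-path: a sequence of consecutively `[M]`-adjacent nodes. -/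
def MPath (H : FinHypergraph α) (M : Finset α) : α → α → Prop :=
  Relation.ReflTransGen (H.MAdj M)

/-- `W` is `[M]`-connected: every two nodes of `W` are joined by an `[M]`-path. -/
def MConn (H : FinHypergraph α) (M W : Finset α) : Prop :=
  ∀ X ∈ W, ∀ Y ∈ W, H.MPath M X Y

/-- `C` is an `[M]`-component: a maximal `[M]`-connected nonempty subset of `nodes(H) \ M`. -/
def MComp (H : FinHypergraph α) (M C : Finset α) : Prop :=
  C.Nonempty ∧ C ⊆ H.nodes \ M ∧ H.MConn M C ∧
    ∀ C' : Finset α, C ⊆ C' → C' ⊆ H.nodes \ M → H.MConn M C' → C' = C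

/-- The frontier `Fr(C)`: the union of all hyperedges of `H` meeting `C`. -/
def Fr (H : FinHypergraph α) (C : Finset α) : Finset α :=
  (H.edges.filter fun h => (h ∩ C).Nonempty).sup id

/-- The border `∂C = Fr(C) \ C`. -/
def border (H : FinHypergraph α) (C : Finset α) : Finset α := H.Fr C \ C

/-- `H1 ≤ H2`: every hyperedge of `H1` is contained in some hyperedge of `H2`. -/
def HLE (H1 H2 : FinHypergraph α) : Prop := ∀ h ∈ H1.edges, ∃ h' ∈ H2.edges, h ⊆ h'

/-- `H` is acyclic iff it has a join tree: a tree on the hyperedges of `H` such that, for every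
node `X`, the set of hyperedges containing `X` induces a connected subtree. -/
def IsAcyclicHG (H : FinHypergraph α) : Prop :=
  ∃ T : SimpleGraph {h : Finset α // h ∈ H.edges},
    T.IsTree ∧ ∀ X ∈ H.nodes,
      (T.induce {e : {h : Finset α // h ∈ H.edges} | X ∈ e.1}).Connected

/-- `H^k`: the hypergraph over the same nodes whose hyperedges are all unions of at most `k`
(and at least one) hyperedges of `H`. -/
def pow (H : FinHypergraph α) (k : ℕ) (hk : 1 ≤ k) : FinHypergraph α where
  nodes := H.nodes
  edges := (H.edges.powerset.filter fun S => S.Nonempty ∧ S.card ≤ k).image fun S => S.sup id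
  edge_sub := by
    intro h hh
    simp only [Finset.mem_image, Finset.mem_filter, Finset.mem_powerset] at hh
    obtain ⟨S, ⟨hS, _, _⟩, rfl⟩ := hh
    exact Finset.sup_le fun i hi => H.edge_sub i (hS hi)
  cover := by
    intro x hx
    obtain ⟨h, hh, hxh⟩ := H.cover x hx
    refine ⟨h, ?_, hxh⟩
    simp only [Finset.mem_image, Finset.mem_filter, Finset.mem_powerset]
    exact ⟨{h}, ⟨Finset.singleton_subset_iff.mpr hh, Finset.singleton_nonempty h,
      by simpa using hk⟩, by simp⟩

/-- The simplicial version of `H`: same nodes, and hyperedges all nonempty subsets of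
hyperedges of `H`. -/
def simplicial (H : FinHypergraph α) : FinHypergraph α where
  nodes := H.nodes
  edges := (H.edges.biUnion Finset.powerset).filter fun s => s.Nonempty
  edge_sub := by
    intro h hh
    simp only [Finset.mem_filter, Finset.mem_biUnion, Finset.mem_powerset] at hh
    obtain ⟨⟨e, he, hsub⟩, -⟩ := hh
    exact hsub.trans (H.edge_sub e he)
  cover := by
    intro x hx
    obtain ⟨h, hh, hxh⟩ := H.cover x hx
    refine ⟨h, ?_, hxh⟩
    simp only [Finset.mem_filter, Finset.mem_biUnion, Finset.mem_powerset]
    exact ⟨⟨h, hh, le_refl _⟩, ⟨x, hxh⟩⟩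

end FinHypergraph

/-- A tree projection of `H1` with respect to `H2`: an acyclic hypergraph `Ha` over the nodes
of `H1` with `H1 ≤ Ha ≤ H2`. -/
def IsTreeProjection (Ha H1 H2 : FinHypergraph α) : Prop :=
  Ha.nodes = H1.nodes ∧ Ha.IsAcyclicHG ∧ FinHypergraph.HLE H1 Ha ∧ FinHypergraph.HLE Ha H2

def HasTreeProjection (H1 H2 : FinHypergraph α) : Prop := ∃ Ha, IsTreeProjection Ha H1 H2

/-! ### The Robber and Captain game -/

/-- A configuration `(h, M, C)`. -/
abbrev Config (α : Type) := Finset α × Finset α × Finset α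

/-- The initial configuration `(∅, ∅, nodes(H1))`. -/
def initConfig (H1 : FinHypergraph α) : Config α := (∅, ∅, H1.nodes)

/-- `Cr` is a `[v, Mr]`-option: an `[Mr]`-component `Cr` of `H1` such that `C ∪ Cr` is
`[M ∩ Mr]`-connected, where `v = (h, M, C)`. -/
def IsOption (H1 : FinHypergraph α) (v : Config α) (Mr Cr : Finset α) : Prop :=
  H1.MComp Mr Cr ∧ H1.MConn (v.2.1 ∩ Mr) (v.2.2 ∪ Cr)

/-- The successor relation of the strategy graph (arcs from a configuration in the domain to the
configurations resulting from the Captain's move and the Robber's choice of an option). -/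
def StratSucc (H1 : FinHypergraph α) (dom : Set (Config α))
    (mv : Config α → Finset α × Finset α) (a b : Config α) : Prop :=
  a ∈ dom ∧ b.1 = (mv a).1 ∧ b.2.1 = (mv a).2 ∧ IsOption H1 a (mv a).2 b.2.2

/-- A strategy for the Captain in the Robber and Captain game on `(H1, H2)`. -/
structure Strategy (H1 H2 : FinHypergraph α) where
  dom : Set (Config α)
  move : Config α → Finset α × Finset α
  init_mem : initConfig H1 ∈ dom
  valid : ∀ v ∈ dom, v = initConfig H1 ∨
    (v.1 ∈ H2.edges ∧ v.2.1 ⊆ v.1 ∧ H1.MComp v.2.1 v.2.2)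
  move_edge : ∀ v ∈ dom, (move v).1 ∈ H2.edges
  move_sub : ∀ v ∈ dom, (move v).2 ⊆ (move v).1 ∩ H1.Fr v.2.2
  closed : ∀ v ∈ dom, ∀ Cr : Finset α,
    IsOption H1 v (move v).2 Cr → ((move v).1, (move v).2, Cr) ∈ dom
  reach : ∀ v ∈ dom, Relation.ReflTransGen (StratSucc H1 dom move) (initConfig H1) v

namespace Strategy

variable {H1 H2 : FinHypergraph α}

/-- The arc relation of the strategy graph `G(σ)`. -/
def Succ (σ : Strategy H1 H2) : Config α → Config α → Prop :=
  StratSucc H1 σ.dom σ.move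

/-- `σ` is winning iff its strategy graph is acyclic. -/
def Winning (σ : Strategy H1 H2) : Prop :=
  ∀ v : Config α, ¬ Relation.TransGen σ.Succ v v

/-- `σ` is monotone: every move is monotone, i.e. every option shrinks the component. -/
def IsMonotone (σ : Strategy H1 H2) : Prop :=
  ∀ v ∈ σ.dom, ∀ Cr : Finset α, IsOption H1 v (σ.move v).2 Cr → Cr ⊆ v.2.2

/-- `σ` is greedy: at `v = (h_p, M_p, C_p)` the move `(h_r, M_r)` satisfies
`M_r = h_r ∩ Fr(C_p)`, with `h_r = h_p` whenever `h_p ∩ C_p ≠ ∅` (otherwise `h_r` is an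
arbitrary hyperedge of `H2`, which is guaranteed by `move_edge`). -/
def Greedy (σ : Strategy H1 H2) : Prop :=
  ∀ v ∈ σ.dom, (σ.move v).2 = (σ.move v).1 ∩ H1.Fr v.2.2 ∧
    ((v.1 ∩ v.2.2).Nonempty → (σ.move v).1 = v.1)

/-- `σ` is nice: `σ(h_p, M_p, C_p) = (h_p, ∂C_p)` whenever `∂C_p ⊂ M_p`. -/
def Nice (σ : Strategy H1 H2) : Prop :=
  ∀ v ∈ σ.dom, H1.border v.2.2 ⊂ v.2.1 → σ.move v = (v.1, H1.border v.2.2)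

end Strategy

/-! ### The Robber and Marshal game -/

/-- A configuration `(h, C)` of the Robber and Marshal game. -/
abbrev MConfig (α : Type) := Finset α × Finset α

/-- The Robber's options in the Robber and Marshal game: `Cr` is an `[hr]`-component such that
`C ∪ Cr` is `[h ∩ hr]`-connected, where `v = (h, C)`. -/
def MarshalOption (H1 : FinHypergraph α) (v : MConfig α) (hr Cr : Finset α) : Prop :=
  H1.MComp hr Cr ∧ H1.MConn (v.1 ∩ hr) (v.2 ∪ Cr)

/-- The successor relation of the Robber and Marshal game under a given Marshal strategy. -/
def MarSucc (H1 : FinHypergraph α) (dom : Set (MConfig α)) (mv : MConfig α → Finset α)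
    (a b : MConfig α) : Prop :=
  a ∈ dom ∧ ¬ a.2 ⊆ a.1 ∧ b.1 = mv a ∧
    (MarshalOption H1 a (mv a) b.2 ∨
      ((¬ ∃ Cr : Finset α, MarshalOption H1 a (mv a) Cr) ∧ b.2 = ∅))

/-- A strategy for the Marshal in the Robber and Marshal game on `(H1, H2)`.
A configuration `(h, C)` with `C ⊆ h` is a capture configuration; at any other configuration of
the domain the Marshal moves to a hyperedge of `H2`. -/
structure MarshalStrategy (H1 H2 : FinHypergraph α) where
  dom : Set (MConfig α)
  move : MConfig α → Finset α
  init_mem : (∅, H1.nodes) ∈ dom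
  valid : ∀ v ∈ dom, v = ((∅ : Finset α), H1.nodes) ∨
    (v.1 ∈ H2.edges ∧ (H1.MComp v.1 v.2 ∨ v.2 = ∅))
  move_edge : ∀ v ∈ dom, ¬ v.2 ⊆ v.1 → move v ∈ H2.edges
  closed : ∀ v ∈ dom, ¬ v.2 ⊆ v.1 → ∀ Cr : Finset α,
    MarshalOption H1 v (move v) Cr → (move v, Cr) ∈ dom
  closed_cap : ∀ v ∈ dom, ¬ v.2 ⊆ v.1 →
    (¬ ∃ Cr : Finset α, MarshalOption H1 v (move v) Cr) → ((move v, ∅) : MConfig α) ∈ dom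
  reach : ∀ v ∈ dom,
    Relation.ReflTransGen (MarSucc H1 dom move) ((∅ : Finset α), H1.nodes) v

namespace MarshalStrategy

variable {H1 H2 : FinHypergraph α}

/-- The Marshal wins: starting from the initial configuration the game always ends in a capture
configuration; equivalently, the game graph of the strategy is acyclic. -/
def Winning (μ : MarshalStrategy H1 H2) : Prop :=
  ∀ v : MConfig α, ¬ Relation.TransGen (MarSucc H1 μ.dom μ.move) v v

/-- The Marshal strategy is monotone: in every move, every available component shrinks. -/
def IsMonotone (μ : MarshalStrategy H1 H2) : Prop :=
  ∀ v ∈ μ.dom, ¬ v.2 ⊆ v.1 → ∀ Cr : Finset α, MarshalOption H1 v (μ.move v) Cr → Cr ⊆ v.2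

end MarshalStrategy

/-! ### Rooted trees and (generalized) hypertree decompositions -/

/-- A finite rooted tree, encoded by a parent function on `Fin (size+1)`. -/
structure RTree where
  size : ℕ
  parent : Fin (size + 1) → Fin (size + 1)
  root : Fin (size + 1)
  parent_root : parent root = root
  reach_root : ∀ v, ∃ m : ℕ, parent^[m] v = root

namespace RTree

/-- Adjacency in the rooted tree. -/
def Adj (T : RTree) (a b : Fin (T.size + 1)) : Prop :=
  a ≠ b ∧ (T.parent a = b ∨ T.parent b = a)

/-- A set of vertices induces a connected subtree. -/
def ConnIn (T : RTree) (S : Set (Fin (T.size + 1))) : Prop :=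
  ∀ a ∈ S, ∀ b ∈ S,
    Relation.ReflTransGen (fun x y => T.Adj x y ∧ x ∈ S ∧ y ∈ S) a b

/-- `q` is a vertex of the subtree rooted at `p` (i.e. a descendant of `p`). -/
def Desc (T : RTree) (p q : Fin (T.size + 1)) : Prop :=
  ∃ m : ℕ, T.parent^[m] q = p

end RTree

/-- A generalized hypertree decomposition of `H`. -/
structure GHDec (H : FinHypergraph α) where
  T : RTree
  chi : Fin (T.size + 1) → Finset α
  lam : Fin (T.size + 1) → Finset (Finset α)
  chi_sub : ∀ p, chi p ⊆ H.nodes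
  lam_sub : ∀ p, lam p ⊆ H.edges
  edge_cover : ∀ h ∈ H.edges, ∃ p, h ⊆ chi p
  conn : ∀ Y ∈ H.nodes, T.ConnIn {p | Y ∈ chi p}
  chi_cov : ∀ p, chi p ⊆ (lam p).sup id

namespace GHDec

variable {H : FinHypergraph α}

/-- The decomposition has width at most `k`. -/
def WidthLE (D : GHDec H) (k : ℕ) : Prop := ∀ p, (D.lam p).card ≤ k

/-- Condition (4) of hypertree decompositions: for every vertex `p`, the intersection of
`⋃ λ(p)` with `⋃_{q in the subtree rooted at p} χ(q)` is contained in `χ(p)`. -/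
def IsHD (D : GHDec H) : Prop :=
  ∀ p, ∀ x ∈ (D.lam p).sup id, (∃ q, D.T.Desc p q ∧ x ∈ D.chi q) → x ∈ D.chi p

end GHDec

/-! An `[M_p ∩ M_r]`-path starting in `C_p` cannot leave `C_p`: its first node outside `C_p` lies
in `Fr(C_p)`, hence, as `C_p` is an `[M_p]`-component, in `M_p ∩ Fr(C_p) ⊆ M_p ∩ M_r`. So
`C_r ⊆ C_p ⊆ Fr(C_p)`, and `C_r`, which avoids `M_r = h_p ∩ Fr(C_p)`, avoids all of `h_p`. An
`[M_r]`-component disjoint from `h_p ⊇ M_r` is an `[h_p]`-component. -/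

namespace FinHypergraph

variable {H : FinHypergraph α} {M N C D : Finset α} {x y : α}

theorem MAdj.symm (h : H.MAdj M x y) : H.MAdj M y x := by
  obtain ⟨e, he, hx, hy, hxM, hyM⟩ := h
  exact ⟨e, he, hy, hx, hyM, hxM⟩

theorem MAdj.mono (hMN : M ⊆ N) (h : H.MAdj N x y) : H.MAdj M x y := by
  obtain ⟨e, he, hx, hy, hxN, hyN⟩ := h
  exact ⟨e, he, hx, hy, fun hxM => hxN (hMN hxM), fun hyM => hyN (hMN hyM)⟩

theorem MConn.mono (hMN : M ⊆ N) (h : H.MConn N C) : H.MConn M C :=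
  fun a ha b hb => Relation.ReflTransGen.mono (fun _ _ => MAdj.mono hMN) a b (h a ha b hb)

theorem mem_Fr {e : Finset α} (he : e ∈ H.edges) (hxe : x ∈ e) (hmeet : (e ∩ C).Nonempty) :
    x ∈ H.Fr C :=
  Finset.mem_sup.mpr ⟨e, Finset.mem_filter.mpr ⟨he, hmeet⟩, hxe⟩

theorem subset_Fr (hC : C ⊆ H.nodes) : C ⊆ H.Fr C := by
  intro x hx
  obtain ⟨e, he, hxe⟩ := H.cover x (hC hx)
  exact mem_Fr he hxe ⟨x, Finset.mem_inter.mpr ⟨hxe, hx⟩⟩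

namespace MComp

theorem subset_nodes (hC : H.MComp M C) : C ⊆ H.nodes :=
  fun _ hx => (Finset.mem_sdiff.mp (hC.2.1 hx)).1

theorem not_mem (hC : H.MComp M C) (hx : x ∈ C) : x ∉ M :=
  (Finset.mem_sdiff.mp (hC.2.1 hx)).2

theorem mem_of_madj (hC : H.MComp M C) (hx : x ∈ C) (hxy : H.MAdj M x y) : y ∈ C := by
  obtain ⟨-, hsub, hconn, hmax⟩ := hC
  have hy : y ∈ H.nodes \ M := by
    obtain ⟨e, he, -, hye, -, hyM⟩ := hxy
    exact Finset.mem_sdiff.mpr ⟨H.edge_sub e he hye, hyM⟩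
  have hpath_to_y : ∀ z ∈ C, H.MPath M z y := fun z hz => (hconn z hz x hx).tail hxy
  have hconn' : H.MConn M (insert y C) := by
    intro a ha b hb
    rcases Finset.mem_insert.mp ha with rfl | haC <;> rcases Finset.mem_insert.mp hb with rfl | hbC
    · exact .refl
    · exact (Relation.ReflTransGen.single hxy.symm).trans (hconn x hx b hbC)
    · exact hpath_to_y a haC
    · exact hconn a haC b hbC
  rw [← hmax _ (Finset.subset_insert y C) (Finset.insert_subset hy hsub) hconn']
  exact Finset.mem_insert_self y C

theorem mem_of_mpath (hC : H.MComp M C) (hx : x ∈ C) (hxy : H.MPath M x y) : y ∈ C := by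
  induction hxy with
  | refl => exact hx
  | tail _ hstep ih => exact hC.mem_of_madj ih hstep

theorem mem_of_mpath_of_inter_Fr_subset (hC : H.MComp M C) (hMN : M ∩ H.Fr C ⊆ N)
    (hx : x ∈ C) (hxy : H.MPath N x y) : y ∈ C := by
  induction hxy with
  | refl => exact hx
  | @tail w z _ hstep hw =>
    obtain ⟨e, he, hwe, hze, -, hzN⟩ := hstep
    have hzM : z ∉ M := fun hzM =>
      hzN (hMN (Finset.mem_inter.mpr ⟨hzM, mem_Fr he hze ⟨w, Finset.mem_inter.mpr ⟨hwe, hw⟩⟩⟩))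
    exact hC.mem_of_madj hw ⟨e, he, hwe, hze, hC.not_mem hw, hzM⟩

theorem subset_of_mconn_union (hC : H.MComp M C) (hMN : M ∩ H.Fr C ⊆ N)
    (hconn : H.MConn N (C ∪ D)) : D ⊆ C := by
  obtain ⟨x, hx⟩ := hC.1
  exact fun y hy => hC.mem_of_mpath_of_inter_Fr_subset hMN hx
    (hconn x (Finset.mem_union_left D hx) y (Finset.mem_union_right C hy))

theorem of_disjoint (hC : H.MComp N C) (hNM : N ⊆ M) (hdisj : Disjoint C M) :
    H.MComp M C := by
  refine ⟨hC.1, fun x hx => Finset.mem_sdiff.mpr ⟨hC.subset_nodes hx,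
    Finset.disjoint_left.mp hdisj hx⟩, ?_, ?_⟩
  · have hstay : ∀ {a b}, a ∈ C → H.MPath N a b → H.MPath M a b := by
      intro a b ha hab
      induction hab with
      | refl => exact .refl
      | @tail w z hpath hstep ih =>
        have hw : w ∈ C := hC.mem_of_mpath ha hpath
        have hz : z ∈ C := hC.mem_of_madj hw hstep
        obtain ⟨e, he, hwe, hze, -, -⟩ := hstep
        exact ih.tail ⟨e, he, hwe, hze, Finset.disjoint_left.mp hdisj hw,
          Finset.disjoint_left.mp hdisj hz⟩
    exact fun a ha b hb => hstay ha (hC.2.2.1 a ha b hb)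
  · intro C' hCC' hC' hconn'
    exact hC.2.2.2 C' hCC' (hC'.trans (Finset.sdiff_subset_sdiff le_rfl hNM)) (hconn'.mono hNM)

end MComp

end FinHypergraph

open FinHypergraph in
theorem greedy_same_squad_components_general {α : Type} [DecidableEq α] (H1 : FinHypergraph α)
    (hp Mp Cp : Finset α) (hMp : Mp ⊆ hp)
    (hCp : H1.MComp Mp Cp)
    (Mr : Finset α) (hMr : Mr = hp ∩ H1.Fr Cp) :
    ∀ Cr : Finset α, H1.MComp Mr Cr → H1.MConn (Mp ∩ Mr) (Cp ∪ Cr) →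
      Cr ⊆ Cp ∧ H1.MComp hp Cr := by
  subst hMr
  intro Cr hCr hconn
  have hCrCp : Cr ⊆ Cp := hCp.subset_of_mconn_union
    (Finset.subset_inter Finset.inter_subset_left (Finset.inter_subset_inter_right hMp)) hconn
  have hdisj : Disjoint Cr hp := Finset.disjoint_left.mpr fun x hx hxhp =>
    hCr.not_mem hx (Finset.mem_inter.mpr ⟨hxhp, subset_Fr hCp.subset_nodes (hCrCp hx)⟩)
  exact ⟨hCrCp, hCr.of_disjoint Finset.inter_subset_left hdisj⟩

/-- Let `C_p` be an `[M_p]`-component with `M_p ⊆ h_p` and `h_p ∩ C_p ≠ ∅`, and let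
`M_r = h_p ∩ Fr(C_p)`. Then every `[M_r]`-component `C_r` such that `C_p ∪ C_r` is
`[M_p ∩ M_r]`-connected satisfies `C_r ⊆ C_p`, and every such `C_r` is an `[h_p]`-component. -/
theorem greedy_same_squad_components {α : Type} [DecidableEq α] (H1 : FinHypergraph α)
    (hp Mp Cp : Finset α) (hhp : hp ⊆ H1.nodes) (hMp : Mp ⊆ hp)
    (hCp : H1.MComp Mp Cp) (hint : (hp ∩ Cp).Nonempty)
    (Mr : Finset α) (hMr : Mr = hp ∩ H1.Fr Cp) :
    ∀ Cr : Finset α, H1.MComp Mr Cr → H1.MConn (Mp ∩ Mr) (Cp ∪ Cr) →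
      Cr ⊆ Cp ∧ H1.MComp hp Cr :=
  greedy_same_squad_components_general H1 hp Mp Cp hMp hCp Mr hMr
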